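/- arXiv:2602.24164 — 4 statements merged into one kernel-verified Lean document; each statement's English description precedes it below -/
import Mathlib

section
/- Let A, X be m×m complex matrices and B, Y be n×n complex matrices (m, n ≥ 1), all involutions: A * A = 1, B * B = 1, X * X = 1, Y * Y = 1. If the Kronecker products satisfy A ⊗ B = X ⊗ Y, then either (A = X and B = Y) or (A = -X and B = -Y). -/
open Matrix
open scoped Kronecker

/-- If involutions satisfy A ⊗ B = X ⊗ Y (Kronecker product), then
A = X and B = Y, or A = -X and B = -Y. -/
theorem kronecker_involution_factor
    {m n : Type*} [Fintype m] [Fintype n] [DecidableEq m] [DecidableEq n]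
    [Nonempty m] [Nonempty n]
    (A X : Matrix m m ℂ) (B Y : Matrix n n ℂ)
    (hA : A * A = 1) (hB : B * B = 1) (hX : X * X = 1) (hY : Y * Y = 1)
    (h : A ⊗ₖ B = X ⊗ₖ Y) :
    (A = X ∧ B = Y) ∨ (A = -X ∧ B = -Y) := by
  have h1 : (A * X) ⊗ₖ (B * Y) = (1 : Matrix (m × n) (m × n) ℂ) := by
    rw [Matrix.mul_kronecker_mul, h, ← Matrix.mul_kronecker_mul, hX, hY,
      Matrix.one_kronecker_one]
  have he : ∀ (i i' : m) (j j' : n),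
      (A * X) i i' * (B * Y) j j' =
        if i = i' then (if j = j' then (1:ℂ) else 0) else 0 := by
    intro i i' j j'
    have := congrFun (congrFun h1 (i, j)) (i', j')
    simpa [Matrix.one_apply, Prod.ext_iff, ite_and] using this
  obtain ⟨i0⟩ := ‹Nonempty m›
  obtain ⟨j0⟩ := ‹Nonempty n›
  set c : ℂ := (A * X) i0 i0 with hc
  have hd : c * (B * Y) j0 j0 = 1 := by simpa using he i0 i0 j0 j0
  have hcne : c ≠ 0 := left_ne_zero_of_mul_eq_one hd
  have hdne : (B * Y) j0 j0 ≠ 0 := right_ne_zero_of_mul_eq_one hd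
  have hCX : A * X = c • (1 : Matrix m m ℂ) := by
    ext i i'
    have h2 := he i i' j0 j0
    have h3 := hd
    by_cases hii : i = i'
    · subst hii
      simp at h2
      have : (A * X) i i * (B * Y) j0 j0 = c * (B * Y) j0 j0 := by rw [h2, hd]
      have := mul_right_cancel₀ hdne this
      simpa [Matrix.smul_apply, Matrix.one_apply] using this
    · simp only [if_neg hii] at h2
      have : (A * X) i i' = 0 := by
        rcases mul_eq_zero.mp h2 with h' | h'
        · exact h'
        · exact absurd h' hdne
      simp [this, Matrix.smul_apply, Matrix.one_apply_ne hii]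
  have hDY : B * Y = c⁻¹ • (1 : Matrix n n ℂ) := by
    ext j j'
    have h2 := he i0 i0 j j'
    simp at h2
    have : c * (B * Y) j j' = (1 : Matrix n n ℂ) j j' := by
      rw [Matrix.one_apply]; exact h2
    have := congrArg (fun z => c⁻¹ * z) this
    rw [← mul_assoc, inv_mul_cancel₀ hcne, one_mul] at this
    simpa [Matrix.smul_apply] using this
  have hAX : A = c • X := by
    have := congrArg (· * X) hCX
    simpa [mul_assoc, hX, Matrix.smul_mul, Matrix.one_mul] using this
  have hBY : B = c⁻¹ • Y := by
    have := congrArg (· * Y) hDY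
    simpa [mul_assoc, hY, Matrix.smul_mul, Matrix.one_mul] using this
  have hc2 : c * c = 1 := by
    have : (c • X) * (c • X) = 1 := by rw [← hAX, hA]
    rw [Matrix.smul_mul, Matrix.mul_smul, hX, smul_smul] at this
    have hent := congrFun (congrFun this i0) i0
    simpa [Matrix.smul_apply, Matrix.one_apply] using hent
  have hcpm : c = 1 ∨ c = -1 := by
    have := mul_self_eq_one_iff.mp hc2
    exact this
  rcases hcpm with h1' | h1'
  · left
    constructor
    · rw [hAX, h1', one_smul]
    · rw [hBY, h1']; norm_num
  · right
    constructor
    · rw [hAX, h1']; simp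
    · rw [hBY, h1']; norm_num
end

section
/- Let A : Fin 3 → Fin 3 → Mₙ(ℂ) be a 3×3 array of complex n×n matrices (n ≥ 1) such that every entry is an involution ((A i j) * (A i j) = 1), and A satisfies the magic square equations. Then A 0 0 anticommutes with A 1 1, i.e. (A 0 0) * (A 1 1) = -((A 1 1) * (A 0 0)), and A 0 1 anticommutes with A 1 0, i.e. (A 0 1) * (A 1 0) = -((A 1 0) * (A 0 1)). -/
open Matrix

/-- A 3×3 array of square complex matrices satisfies the magic square equations:
entries in the same row commute, entries in the same column commute, each row
multiplies to 1, the first two columns multiply to 1, and the last column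
multiplies to -1. -/
def MagicSquare {n : Type*} [Fintype n] [DecidableEq n]
    (A : Fin 3 → Fin 3 → Matrix n n ℂ) : Prop :=
  (∀ i j j', A i j * A i j' = A i j' * A i j) ∧
  (∀ j i i', A i j * A i' j = A i' j * A i j) ∧
  (∀ i, A i 0 * A i 1 * A i 2 = 1) ∧
  (∀ j : Fin 3, j ≠ 2 → A 0 j * A 1 j * A 2 j = 1) ∧
  A 0 2 * A 1 2 * A 2 2 = -1

section Aux
variable {R : Type*} [Ring R]

lemma aux_third (a b c : R) (ha : a * a = 1) (hb : b * b = 1)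
    (h : a * b * c = 1) : c = b * a := by
  calc c = (b * (a * a) * b) * c := by rw [ha, mul_one, hb, one_mul]
    _ = b * a * (a * b * c) := by noncomm_ring
    _ = b * a := by rw [h, mul_one]

lemma aux_third_neg (a b c : R) (ha : a * a = 1) (hb : b * b = 1)
    (h : a * b * c = -1) : c = -(b * a) := by
  calc c = (b * (a * a) * b) * c := by rw [ha, mul_one, hb, one_mul]
    _ = b * a * (a * b * c) := by noncomm_ring
    _ = b * a * (-1) := by rw [h]
    _ = -(b * a) := by noncomm_ring

lemma aux_cancel (x y p q : R) (hx : x * x = 1) (hy : y * y = 1)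
    (h : x * p * y = -(x * q * y)) : p = -q := by
  calc p = x * (x * p * y) * y - (x * x - 1) * p * (y * y) - p * (y * y - 1) := by
        noncomm_ring
    _ = x * (-(x * q * y)) * y - (x * x - 1) * p * (y * y) - p * (y * y - 1) := by rw [h]
    _ = -((x * x) * q * (y * y)) - (x * x - 1) * p * (y * y) - p * (y * y - 1) := by
        noncomm_ring
    _ = -q := by rw [hx, hy]; noncomm_ring

end Aux

/-- In any solution of the magic square by involutions, A 0 0 anticommutes with
A 1 1, and A 0 1 anticommutes with A 1 0. -/
theorem magicSquare_anticommute
    {n : Type*} [Fintype n] [DecidableEq n] [Nonempty n]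
    (A : Fin 3 → Fin 3 → Matrix n n ℂ)
    (hinv : ∀ i j, A i j * A i j = 1)
    (hms : MagicSquare A) :
    A 0 0 * A 1 1 = -(A 1 1 * A 0 0) ∧ A 0 1 * A 1 0 = -(A 1 0 * A 0 1) := by
  obtain ⟨hrow, hcol, hr, hc, hc2⟩ := hms
  set a := A 0 0 with ha'
  set b := A 0 1 with hb'
  set c := A 0 2 with hc'
  set d := A 1 0 with hd'
  set e := A 1 1 with he'
  set f := A 1 2 with hf'
  set g := A 2 0 with hg'
  set h := A 2 1 with hh'
  -- basic involutions
  have iaa : a * a = 1 := hinv 0 0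
  have ibb : b * b = 1 := hinv 0 1
  have icc : c * c = 1 := hinv 0 2
  have idd : d * d = 1 := hinv 1 0
  have iee : e * e = 1 := hinv 1 1
  have iff' : f * f = 1 := hinv 1 2
  have igg : g * g = 1 := hinv 2 0
  have ihh : h * h = 1 := hinv 2 1
  -- commutation relations
  have cab : a * b = b * a := hrow 0 0 1
  have cde : d * e = e * d := hrow 1 0 1
  have cgh : g * h = h * g := hrow 2 0 1
  have ccf : c * f = f * c := hcol 2 0 1
  -- expressing third entries
  have hcba : c = b * a := aux_third a b c iaa ibb (hr 0)
  have hfed : f = e * d := aux_third d e f idd iee (hr 1)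
  have hgda : g = d * a := aux_third a d g iaa idd (hc 0 (by decide))
  have hheb : h = e * b := aux_third b e h ibb iee (hc 1 (by decide))
  -- two expressions for A 2 2
  have hi1 : A 2 2 = h * g := aux_third g h (A 2 2) igg ihh (hr 2)
  have hi2 : A 2 2 = -(f * c) := aux_third_neg c f (A 2 2) icc iff' hc2
  -- key equation: h*g = -(f*c)
  have key : h * g = -(f * c) := hi1 ▸ hi2
  constructor
  · -- A 0 0 anticommutes with A 1 1 : cancel d on the left and b on the right
    have k1 : d * (a * e) * b = -(d * (e * a) * b) := by
      calc d * (a * e) * b = (d * a) * (e * b) := by noncomm_ring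
        _ = g * h := by rw [hgda, hheb]
        _ = h * g := cgh
        _ = -(f * c) := key
        _ = -((d * e) * (a * b)) := by rw [hfed, hcba, cde, cab]
        _ = -(d * (e * a) * b) := by noncomm_ring
    exact aux_cancel d b (a * e) (e * a) idd ibb k1
  · -- A 0 1 anticommutes with A 1 0 : cancel e on the left and a on the right
    have k2 : e * (b * d) * a = -(e * (d * b) * a) := by
      calc e * (b * d) * a = (e * b) * (d * a) := by noncomm_ring
        _ = h * g := by rw [hgda, hheb]
        _ = -(f * c) := key
        _ = -((e * d) * (b * a)) := by rw [hfed, hcba]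
        _ = -(e * (d * b) * a) := by noncomm_ring
    exact aux_cancel e a (b * d) (d * b) iee iaa k2
end

section
/- Let S be a finite basis-complete set of nonzero vectors in EuclideanSpace ℝ (Fin 3) such that every maximal orthogonal subset of S has exactly 3 elements, and suppose S is a Kochen–Specker set: there is no g : S → Bool such that every maximal orthogonal subset of S contains exactly one element with g = true. Let f assign to every v ∈ S a projector f(v) ∈ M₃(ℝ) (f(v)ᵀ = f(v) and f(v) * f(v) = f(v)) such that f(v) * f(w) = 0 for all distinct orthogonal v, w ∈ S, and Σ_{v ∈ C} f(v) = 1 for every maximal orthogonal subset C of S. Then there exists a maximal orthogonal subset C of S such that rank(f(v)) = 1 for every v ∈ C. -/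
/-!
Since each `f v` is idempotent, its trace is its rank, so taking traces in `∑ v ∈ C, f v = 1`
shows that the ranks over every maximal orthogonal triple `C` sum to `3`. If no triple consisted
of rank-one projectors, each triple would then contain exactly one vector whose projector has
rank at least `2`, and marking those vectors would be a Kochen–Specker colouring of `S`.
-/

open Matrix

/-- A finite set of vectors is basis-complete if it is the union of a family of
orthonormal bases of ℝ³. -/
def BasisComplete (S : Finset (EuclideanSpace ℝ (Fin 3))) : Prop :=
  ∃ (I : Type) (b : I → OrthonormalBasis (Fin 3) ℝ (EuclideanSpace ℝ (Fin 3))),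
    (S : Set (EuclideanSpace ℝ (Fin 3))) = ⋃ i, Set.range (b i)

/-- A finite set of vectors is pairwise orthogonal if its elements are nonzero
and mutually orthogonal. -/
def PairwiseOrtho (C : Finset (EuclideanSpace ℝ (Fin 3))) : Prop :=
  (∀ v ∈ C, v ≠ 0) ∧ ∀ v ∈ C, ∀ w ∈ C, v ≠ w → (inner ℝ v w : ℝ) = 0

/-- C is a maximal orthogonal subset of S: C ⊆ S is pairwise orthogonal and not
properly contained in any pairwise orthogonal subset of S. -/
def MaxOrtho (S C : Finset (EuclideanSpace ℝ (Fin 3))) : Prop :=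
  C ⊆ S ∧ PairwiseOrtho C ∧
    ∀ C', C ⊆ C' → C' ⊆ S → PairwiseOrtho C' → C' = C

theorem IsIdempotentElem.matrix_trace_eq_rank {K n : Type*} [Field K] [Fintype n] [DecidableEq n]
    {A : Matrix n n K} (hA : IsIdempotentElem A) : A.trace = A.rank := by
  have hlin : IsIdempotentElem A.mulVecLin := hA.map Matrix.toLinAlgEquiv'
  rw [← Matrix.trace_toLin'_eq, Matrix.toLin'_apply',
    (LinearMap.IsIdempotentElem.isProj_range _ hlin).trace, Matrix.rank]

theorem Matrix.sum_rank_eq_card_of_sum_eq_one {K n ι : Type*} [Field K] [CharZero K] [Fintype n]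
    [DecidableEq n] {s : Finset ι} {P : ι → Matrix n n K}
    (hP : ∀ i ∈ s, IsIdempotentElem (P i)) (hsum : ∑ i ∈ s, P i = 1) :
    ∑ i ∈ s, (P i).rank = Fintype.card n := by
  have : (∑ i ∈ s, (P i).rank : K) = Fintype.card n :=
    calc (∑ i ∈ s, (P i).rank : K) = ∑ i ∈ s, (P i).trace :=
          Finset.sum_congr rfl fun i hi => (hP i hi).matrix_trace_eq_rank.symm
      _ = Fintype.card n := by rw [← Matrix.trace_sum, hsum, Matrix.trace_one]
  exact_mod_cast this

theorem Finset.existsUnique_two_le_of_sum_eq_card {α : Type*} {C : Finset α} {r : α → ℕ}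
    (hC : C.card ≤ 3) (hsum : ∑ v ∈ C, r v = C.card) (hne : ∃ v ∈ C, r v ≠ 1) :
    ∃! v, v ∈ C ∧ 2 ≤ r v := by
  classical
  have hex : ∃ v ∈ C, 2 ≤ r v := by
    by_contra! hle
    obtain ⟨v, hv, hv1⟩ := hne
    have : ∑ v ∈ C, r v < ∑ _v ∈ C, 1 :=
      Finset.sum_lt_sum (fun w hw => by have := hle w hw; omega)
        ⟨v, hv, by have := hle v hv; omega⟩
    simp [hsum] at this
  obtain ⟨v, hv, hv2⟩ := hex
  refine ⟨v, ⟨hv, hv2⟩, fun w ⟨hw, hw2⟩ => ?_⟩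
  by_contra hwv
  have : r w + r v ≤ ∑ v ∈ C, r v := by
    rw [← Finset.sum_pair hwv]
    exact Finset.sum_le_sum_of_subset (Finset.insert_subset hw (Finset.singleton_subset_iff.mpr hv))
  omega

theorem kochenSpecker_rank_one_triple_general
    (S : Finset (EuclideanSpace ℝ (Fin 3)))
    (hcard : ∀ C, MaxOrtho S C → C.card = 3)
    (hks : ¬ ∃ g : EuclideanSpace ℝ (Fin 3) → Bool,
      ∀ C, MaxOrtho S C → ∃! v, v ∈ C ∧ g v = true)
    (f : EuclideanSpace ℝ (Fin 3) → Matrix (Fin 3) (Fin 3) ℝ)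
    (hproj : ∀ v ∈ S, (f v)ᵀ = f v ∧ f v * f v = f v)
    (hsum : ∀ C, MaxOrtho S C → ∑ v ∈ C, f v = 1) :
    ∃ C, MaxOrtho S C ∧ ∀ v ∈ C, (f v).rank = 1 := by
  by_contra! hcon
  refine hks ⟨fun v => decide (2 ≤ (f v).rank), fun C hC => ?_⟩
  have hrank : ∑ v ∈ C, (f v).rank = C.card := by
    rw [hcard C hC, Matrix.sum_rank_eq_card_of_sum_eq_one
      (fun v hv => (hproj v (hC.1 hv)).2) (hsum C hC), Fintype.card_fin]
  simpa using Finset.existsUnique_two_le_of_sum_eq_card (hcard C hC).le hrank (hcon C hC)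

/-- For a basis-complete Kochen–Specker set S in ℝ³, any assignment of real
projectors respecting orthogonality whose sums over maximal orthogonal subsets
are the identity must assign only rank-1 projectors on some maximal orthogonal
subset. -/
theorem kochenSpecker_rank_one_triple
    (S : Finset (EuclideanSpace ℝ (Fin 3)))
    (hnz : ∀ v ∈ S, v ≠ 0)
    (hbc : BasisComplete S)
    (hcard : ∀ C, MaxOrtho S C → C.card = 3)
    (hks : ¬ ∃ g : EuclideanSpace ℝ (Fin 3) → Bool,
      ∀ C, MaxOrtho S C → ∃! v, v ∈ C ∧ g v = true)
    (f : EuclideanSpace ℝ (Fin 3) → Matrix (Fin 3) (Fin 3) ℝ)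
    (hproj : ∀ v ∈ S, (f v)ᵀ = f v ∧ f v * f v = f v)
    (horth : ∀ v ∈ S, ∀ w ∈ S, v ≠ w → (inner ℝ v w : ℝ) = 0 → f v * f w = 0)
    (hsum : ∀ C, MaxOrtho S C → ∑ v ∈ C, f v = 1) :
    ∃ C, MaxOrtho S C ∧ ∀ v ∈ C, (f v).rank = 1 :=
  kochenSpecker_rank_one_triple_general S hcard hks f hproj hsum
end

section
/- Let 𝕂 be ℝ or ℂ. There exists a function f from the set of projectors in M₂(𝕂) (matrices E with Eᴴ = E and E * E = E) to Bool such that: f(0) = false, f(1) = true, f(1 - E) = ¬ f(E) for every projector E, and for all projectors E, F that commute (E * F = F * E), f(E * F) = (f(E) ∧ f(F)) and f(E + F - E * F) = (f(E) ∨ f(F)). -/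
open Matrix RCLike

section aux
variable {𝕂 : Type*} [RCLike 𝕂]

lemma sq_eq_self' {a : 𝕂} (h : a * a = a) : a = 0 ∨ a = 1 := by
  have h' : a * (a - 1) = 0 := by linear_combination h
  rcases mul_eq_zero.mp h' with h | h
  · exact Or.inl h
  · exact Or.inr (by linear_combination h)

/-- entry facts for a nontrivial projector -/
lemma proj_entries (E : Matrix (Fin 2) (Fin 2) 𝕂)
    (hH : Eᴴ = E) (h2 : E * E = E) (h0 : E ≠ 0) (h1 : E ≠ 1) :
    E 1 0 = starRingEnd 𝕂 (E 0 1) ∧ E 1 1 = 1 - E 0 0 := by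
  have h10 : E 1 0 = starRingEnd 𝕂 (E 0 1) := by
    have := congrFun (congrFun hH 1) 0
    simpa [Matrix.conjTranspose_apply] using this.symm
  refine ⟨h10, ?_⟩
  have e01 := congrFun (congrFun h2 0) 1
  rw [Matrix.mul_apply, Fin.sum_univ_two] at e01
  by_cases hb : E 0 1 = 0
  · have e00 := congrFun (congrFun h2 0) 0
    have e11 := congrFun (congrFun h2 1) 1
    rw [Matrix.mul_apply, Fin.sum_univ_two] at e00 e11
    rw [h10, hb] at e00 e11
    simp only [hb, map_zero, mul_zero, zero_mul, add_zero, zero_add] at e00 e11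
    rcases sq_eq_self' e00 with ha | ha <;> rcases sq_eq_self' e11 with hd | hd
    · exfalso; apply h0
      ext i j; fin_cases i <;> fin_cases j <;>
        simp [ha, hb, hd, h10]
    · rw [hd, ha]; ring
    · rw [hd, ha]; ring
    · exfalso; apply h1
      ext i j; fin_cases i <;> fin_cases j <;>
        simp [ha, hb, hd, h10, Matrix.one_apply]
  · have h' : E 0 1 * (E 0 0 + E 1 1 - 1) = 0 := by linear_combination e01
    rcases mul_eq_zero.mp h' with h | h
    · exact absurd h hb
    · linear_combination h

/-- commuting nontrivial projectors in dim 2 coincide or are complementary -/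
lemma commuting_proj (E F : Matrix (Fin 2) (Fin 2) 𝕂)
    (hEH : Eᴴ = E) (hE2 : E * E = E) (hE0 : E ≠ 0) (hE1 : E ≠ 1)
    (hFH : Fᴴ = F) (hF2 : F * F = F) (hF0 : F ≠ 0) (hF1 : F ≠ 1)
    (hc : E * F = F * E) : F = E ∨ F = 1 - E := by
  obtain ⟨hE10, hE11⟩ := proj_entries E hEH hE2 hE0 hE1
  obtain ⟨hF10, hF11⟩ := proj_entries F hFH hF2 hF0 hF1
  set a := E 0 0 with ha
  set b := E 0 1 with hb
  set p := F 0 0 with hp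
  set q := F 0 1 with hq
  have hca : starRingEnd 𝕂 a = a := by
    have := congrFun (congrFun hEH 0) 0
    simpa [Matrix.conjTranspose_apply] using this
  have hcp : starRingEnd 𝕂 p = p := by
    have := congrFun (congrFun hFH 0) 0
    simpa [Matrix.conjTranspose_apply] using this
  have e1 : a * a + b * starRingEnd 𝕂 b = a := by
    have h' := congrFun (congrFun hE2 0) 0
    rw [Matrix.mul_apply, Fin.sum_univ_two] at h'
    rw [hE10] at h'; linear_combination h'
  have e2 : p * p + q * starRingEnd 𝕂 q = p := by
    have h' := congrFun (congrFun hF2 0) 0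
    rw [Matrix.mul_apply, Fin.sum_univ_two] at h'
    rw [hF10] at h'; linear_combination h'
  have c00 : b * starRingEnd 𝕂 q = q * starRingEnd 𝕂 b := by
    have h' := congrFun (congrFun hc 0) 0
    rw [Matrix.mul_apply, Fin.sum_univ_two, Matrix.mul_apply, Fin.sum_univ_two] at h'
    rw [hE10, hF10] at h'; linear_combination h'
  have c01 : q * (2 * a - 1) = b * (2 * p - 1) := by
    have h' := congrFun (congrFun hc 0) 1
    rw [Matrix.mul_apply, Fin.sum_univ_two, Matrix.mul_apply, Fin.sum_univ_two] at h'
    rw [hE11, hF11] at h'; linear_combination h'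
  have c01' : starRingEnd 𝕂 q * (2 * a - 1) = starRingEnd 𝕂 b * (2 * p - 1) := by
    have h' := congrArg (starRingEnd 𝕂) c01
    simpa only [_root_.map_mul, _root_.map_sub, _root_.map_one, _root_.map_ofNat, hca, hcp] using h'
  have conclE : p = a → q = b → F = E := by
    intro h1 h2
    ext i j; fin_cases i <;> fin_cases j
    · exact h1
    · exact h2
    · show F 1 0 = E 1 0
      rw [hF10, hE10, h2]
    · show F 1 1 = E 1 1
      rw [hF11, hE11, h1]
  have conclC : p = 1 - a → q = -b → F = 1 - E := by
    intro h1 h2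
    ext i j; fin_cases i <;> fin_cases j
    · show F 0 0 = (1 - E) 0 0
      rw [Matrix.sub_apply, Matrix.one_apply_eq]; exact h1
    · show F 0 1 = (1 - E) 0 1
      rw [Matrix.sub_apply, Matrix.one_apply_ne (by decide : (0 : Fin 2) ≠ 1), zero_sub]
      exact h2
    · show F 1 0 = (1 - E) 1 0
      rw [Matrix.sub_apply, Matrix.one_apply_ne (by decide : (1 : Fin 2) ≠ 0), zero_sub,
        hF10, hE10, h2, map_neg]
    · show F 1 1 = (1 - E) 1 1
      rw [Matrix.sub_apply, Matrix.one_apply_eq, hF11, hE11, h1]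
  by_cases hu : (2 * a - 1 : 𝕂) = 0
  · -- a = 1/2 case
    have ha2 : a = 1/2 := by linear_combination hu / 2
    have hbb : b * starRingEnd 𝕂 b = 1/4 := by
      rw [ha2] at e1; linear_combination e1
    have hbne : b ≠ 0 := by
      intro h; rw [h, zero_mul] at hbb; norm_num at hbb
    have hv : (2 * p - 1 : 𝕂) = 0 := by
      have h' : b * (2 * p - 1) = 0 := by rw [← c01, hu, mul_zero]
      exact (mul_eq_zero.mp h').resolve_left hbne
    have hp2 : p = 1/2 := by linear_combination hv / 2
    have hqq : q * starRingEnd 𝕂 q = 1/4 := by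
      rw [hp2] at e2; linear_combination e2
    have hz2 : (b * starRingEnd 𝕂 q - 1/4) * (b * starRingEnd 𝕂 q + 1/4) = 0 := by
      have h' : (b * starRingEnd 𝕂 q) * (b * starRingEnd 𝕂 q)
          = (b * starRingEnd 𝕂 b) * (q * starRingEnd 𝕂 q) := by
        nth_rewrite 2 [c00]; ring
      rw [hbb, hqq] at h'
      linear_combination h'
    rcases mul_eq_zero.mp hz2 with h' | h'
    · -- b q̄ = 1/4 = b b̄  ⇒ q = b
      have hzz : b * (starRingEnd 𝕂 q - starRingEnd 𝕂 b) = 0 := by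
        linear_combination h' - hbb
      have hcq : starRingEnd 𝕂 q = starRingEnd 𝕂 b :=
        sub_eq_zero.mp ((mul_eq_zero.mp hzz).resolve_left hbne)
      have hqb : q = b := by
        have := congrArg (starRingEnd 𝕂) hcq
        simpa [RCLike.conj_conj] using this
      exact Or.inl (conclE (by rw [hp2, ha2]) hqb)
    · have hzz : b * (starRingEnd 𝕂 q + starRingEnd 𝕂 b) = 0 := by
        linear_combination h' + hbb
      have hcq : starRingEnd 𝕂 q = -starRingEnd 𝕂 b := by
        exact eq_neg_of_add_eq_zero_left ((mul_eq_zero.mp hzz).resolve_left hbne)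
      have hqb : q = -b := by
        have := congrArg (starRingEnd 𝕂) hcq
        simpa [RCLike.conj_conj, map_neg] using this
      exact Or.inr (conclC (by rw [hp2, ha2]; norm_num) hqb)
  · -- a ≠ 1/2 case
    have key : ((2*p-1) - (2*a-1)) * ((2*p-1) + (2*a-1)) = 0 := by
      have m : (q * (2*a-1)) * (starRingEnd 𝕂 q * (2*a-1))
          = (b * (2*p-1)) * (starRingEnd 𝕂 b * (2*p-1)) := by rw [c01, c01']
      linear_combination -4 * m + 4*(2*a-1)^2 * e2 - 4*(2*p-1)^2 * e1
    rcases mul_eq_zero.mp key with h' | h'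
    · have hpa : p = a := by linear_combination h' / 2
      have hqb : q = b := by
        have h'' : (q - b) * (2*a-1) = 0 := by
          linear_combination c01 + b * h'
        exact sub_eq_zero.mp ((mul_eq_zero.mp h'').resolve_right hu)
      exact Or.inl (conclE hpa hqb)
    · have hpa : p = 1 - a := by linear_combination h' / 2
      have hqb : q = -b := by
        have h'' : (q + b) * (2*a-1) = 0 := by
          linear_combination c01 + b * h'
        have h3 := (mul_eq_zero.mp h'').resolve_right hu
        linear_combination h3
      exact Or.inr (conclC hpa hqb)

lemma flip_iff (α β γ : ℝ) (hnd : α = 1/2 → ¬(β = 0 ∧ γ = 0)) :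
    (1/2 < 1 - α ∨ (1 - α = 1/2 ∧ (0 < -β ∨ (-β = 0 ∧ 0 < -γ)))) ↔
    ¬(1/2 < α ∨ (α = 1/2 ∧ (0 < β ∨ (β = 0 ∧ 0 < γ)))) := by
  constructor
  · rintro (h | ⟨h1, (h2 | ⟨h2, h3⟩)⟩) <;>
      rintro (h' | ⟨h1', (h2' | ⟨h2', h3'⟩)⟩) <;> linarith
  · intro h
    push_neg at h
    obtain ⟨h1, h2⟩ := h
    rcases lt_or_eq_of_le h1 with hlt | heq
    · left; linarith
    · right
      refine ⟨by linarith, ?_⟩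
      obtain ⟨hb, hg⟩ := h2 heq
      rcases lt_or_eq_of_le hb with hb' | hb'
      · left; linarith
      · right
        have hγ := hg hb'
        have hne := hnd heq
        have hγne : γ ≠ 0 := fun hγ0 => hne ⟨hb', hγ0⟩
        refine ⟨by linarith, ?_⟩
        rcases lt_or_eq_of_le hγ with hg' | hg'
        · linarith
        · exact absurd hg' hγne
end aux

/-- There is a two-valued morphism on the partial Boolean algebra of projectors
in M₂(𝕂), 𝕂 ∈ {ℝ, ℂ}: a Boolean-valued function on projectors sending 0 to
false, 1 to true, respecting complement, and respecting meet and join of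
commuting projectors. -/
theorem exists_two_valued_morphism_dim_two {𝕂 : Type*} [RCLike 𝕂] :
    ∃ f : Matrix (Fin 2) (Fin 2) 𝕂 → Bool,
      f 0 = false ∧ f 1 = true ∧
      (∀ E : Matrix (Fin 2) (Fin 2) 𝕂, Eᴴ = E → E * E = E →
        f (1 - E) = !(f E)) ∧
      (∀ E F : Matrix (Fin 2) (Fin 2) 𝕂, Eᴴ = E → E * E = E → Fᴴ = F → F * F = F →
        E * F = F * E →
        f (E * F) = (f E && f F) ∧ f (E + F - E * F) = (f E || f F)) := by
  classical
  set f : Matrix (Fin 2) (Fin 2) 𝕂 → Bool := fun M =>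
    decide ((1:ℝ)/2 < re (M 0 0) ∨ (re (M 0 0) = 1/2 ∧
      (0 < re (M 0 1) ∨ (re (M 0 1) = 0 ∧ 0 < im (M 0 1))))) with hfdef
  have hf0 : f 0 = false := by
    rw [hfdef]
    simp only [Matrix.zero_apply, map_zero, decide_eq_false_iff_not]
    push_neg
    norm_num
  have hf1 : f 1 = true := by
    rw [hfdef]
    simp only [decide_eq_true_eq]
    left
    rw [Matrix.one_apply_eq]
    norm_num
  have hfc : ∀ E : Matrix (Fin 2) (Fin 2) 𝕂, Eᴴ = E → E * E = E →
      f (1 - E) = !(f E) := by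
    intro E hH h2
    rw [hfdef]
    simp only
    rw [← decide_not, decide_eq_decide]
    have e00 : (1 - E) 0 0 = 1 - E 0 0 := by
      simp [Matrix.sub_apply, Matrix.one_apply_eq]
    have e01 : (1 - E) 0 1 = -(E 0 1) := by
      simp [Matrix.sub_apply, Matrix.one_apply_ne]
    rw [e00, e01, _root_.map_sub, RCLike.one_re, _root_.map_neg, _root_.map_neg]
    apply flip_iff
    -- nondegeneracy
    rintro hre ⟨hβ, hγ⟩
    have hb0 : E 0 1 = 0 := by
      apply RCLike.ext <;> simp [hβ, hγ]
    have hca : starRingEnd 𝕂 (E 0 0) = E 0 0 := by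
      have := congrFun (congrFun hH 0) 0
      simpa [Matrix.conjTranspose_apply] using this
    have ha : E 0 0 = (1/2 : 𝕂) := by
      have h3 := (RCLike.conj_eq_iff_re.mp hca)
      rw [← h3, hre]
      push_cast
      norm_num
    have h10 : E 1 0 = starRingEnd 𝕂 (E 0 1) := by
      have := congrFun (congrFun hH 1) 0
      simpa [Matrix.conjTranspose_apply] using this.symm
    have e1 := congrFun (congrFun h2 0) 0
    rw [Matrix.mul_apply, Fin.sum_univ_two, h10, hb0, ha] at e1
    norm_num at e1
  refine ⟨f, hf0, hf1, hfc, ?_⟩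
  intro E F hEH hE2 hFH hF2 hc
  by_cases hE0 : E = 0
  · subst hE0
    constructor
    · rw [Matrix.zero_mul, hf0]; simp
    · rw [show (0 : Matrix (Fin 2) (Fin 2) 𝕂) + F - 0 * F = F by simp, hf0]; simp
  by_cases hE1 : E = 1
  · subst hE1
    constructor
    · rw [Matrix.one_mul, hf1]; simp
    · rw [show (1 : Matrix (Fin 2) (Fin 2) 𝕂) + F - 1 * F = 1 by
        rw [Matrix.one_mul]; abel, hf1]; simp
  by_cases hF0 : F = 0
  · subst hF0
    constructor
    · rw [Matrix.mul_zero, hf0]; simp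
    · rw [show E + 0 - E * 0 = E by rw [Matrix.mul_zero]; abel, hf0]; simp
  by_cases hF1 : F = 1
  · subst hF1
    constructor
    · rw [Matrix.mul_one, hf1]; simp
    · rw [show E + 1 - E * 1 = 1 by rw [Matrix.mul_one]; abel, hf1]; simp
  rcases commuting_proj E F hEH hE2 hE0 hE1 hFH hF2 hF0 hF1 hc with h | h
  · subst h
    constructor
    · rw [hF2, Bool.and_self]
    · rw [show F + F - F * F = F by rw [hF2]; abel, Bool.or_self]
  · subst h
    have hmul : E * (1 - E) = 0 := by rw [Matrix.mul_sub, Matrix.mul_one, hE2, sub_self]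
    constructor
    · rw [hmul, hf0, hfc E hEH hE2, Bool.and_not_self]
    · rw [show E + (1 - E) - E * (1 - E) = 1 by rw [hmul]; abel, hf1,
        hfc E hEH hE2, Bool.or_not_self]
end
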